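/- Let μ be a multiplication on A, with symmetric part ρ(x,y) = μ(x,y) + μ(y,x) and skew-symmetric part ψ(x,y) = μ(x,y) − μ(y,x). Then the cyclic identity A_μ(x,y,z) + A_μ(y,z,x) + A_μ(z,x,y) = 0 holds for all x,y,z ∈ A if and only if ψ satisfies the Jacobi identity and ψ(x,ρ(y,z)) + ψ(y,ρ(z,x)) + ψ(z,ρ(x,y)) = 0 holds for all x,y,z ∈ A. -/

import Mathlib

/-
Write `C(x,y,z)` for the cyclic sum of associators. Expanding bilinearly, the Jacobi sum of
`ψ` is `C(x,y,z) - C(y,x,z)` and the mixed sum `Σ_cyc ψ(x, ρ(y,z))` is `C(x,y,z) + C(y,x,z)`.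
So both vanish when `C` does, and conversely their sum is `2 C(x,y,z)`, which forces `C = 0`
in characteristic `0`.
-/

/-- The associator of a bilinear multiplication. -/
def assocMap {K A : Type*} [Field K] [AddCommGroup A] [Module K A]
    (μ : A →ₗ[K] A →ₗ[K] A) (x y z : A) : A :=
  μ x (μ y z) - μ (μ x y) z

/-- The symmetric part of a bilinear multiplication. -/
def symPart {K A : Type*} [Field K] [AddCommGroup A] [Module K A]
    (μ : A →ₗ[K] A →ₗ[K] A) (x y : A) : A :=
  μ x y + μ y x

/-- The skew-symmetric part of a bilinear multiplication. -/
def skewPart {K A : Type*} [Field K] [AddCommGroup A] [Module K A]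
    (μ : A →ₗ[K] A →ₗ[K] A) (x y : A) : A :=
  μ x y - μ y x

section CyclicAssoc

variable {K A : Type*} [Field K] [AddCommGroup A] [Module K A] (μ : A →ₗ[K] A →ₗ[K] A)

def cyclicAssoc (x y z : A) : A :=
  assocMap μ x y z + assocMap μ y z x + assocMap μ z x y

theorem skewPart_jacobi_eq_cyclicAssoc_sub (x y z : A) :
    skewPart μ x (skewPart μ y z) + skewPart μ y (skewPart μ z x) +
        skewPart μ z (skewPart μ x y) =
      cyclicAssoc μ x y z - cyclicAssoc μ y x z := by
  simp only [cyclicAssoc, assocMap, skewPart, map_sub, LinearMap.sub_apply]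
  abel

theorem skewPart_symPart_cyclic_eq_cyclicAssoc_add (x y z : A) :
    skewPart μ x (symPart μ y z) + skewPart μ y (symPart μ z x) +
        skewPart μ z (symPart μ x y) =
      cyclicAssoc μ x y z + cyclicAssoc μ y x z := by
  simp only [cyclicAssoc, assocMap, skewPart, symPart, map_add, LinearMap.add_apply]
  abel

end CyclicAssoc

/-- The cyclic identity `A_μ(x,y,z) + A_μ(y,z,x) + A_μ(z,x,y) = 0` holds iff the
skew-symmetric part `ψ` satisfies the Jacobi identity and
`ψ(x,ρ(y,z)) + ψ(y,ρ(z,x)) + ψ(z,ρ(x,y)) = 0`, `ρ` being the symmetric part. -/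
theorem cyclic_polarization {K A : Type*} [Field K] [CharZero K]
    [AddCommGroup A] [Module K A]
    (μ : A →ₗ[K] A →ₗ[K] A) :
    (∀ x y z : A, assocMap μ x y z + assocMap μ y z x + assocMap μ z x y = 0) ↔
    ((∀ x y z : A,
        skewPart μ x (skewPart μ y z) + skewPart μ y (skewPart μ z x) +
          skewPart μ z (skewPart μ x y) = 0) ∧
     (∀ x y z : A,
        skewPart μ x (symPart μ y z) + skewPart μ y (symPart μ z x) +
          skewPart μ z (symPart μ x y) = 0)) := by
  change (∀ x y z, cyclicAssoc μ x y z = 0) ↔ _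
  refine ⟨fun h => ⟨fun x y z => ?_, fun x y z => ?_⟩, fun ⟨hJacobi, hMixed⟩ x y z => ?_⟩
  · rw [skewPart_jacobi_eq_cyclicAssoc_sub, h, h, sub_zero]
  · rw [skewPart_symPart_cyclic_eq_cyclicAssoc_add, h, h, add_zero]
  · have hTwice : (2 : K) • cyclicAssoc μ x y z = 0 := by
      rw [two_smul, ← sub_add_add_cancel _ _ (cyclicAssoc μ y x z),
        ← skewPart_jacobi_eq_cyclicAssoc_sub, ← skewPart_symPart_cyclic_eq_cyclicAssoc_add,
        hJacobi, hMixed, add_zero]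
    exact (smul_eq_zero.mp hTwice).resolve_left two_ne_zero
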